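/- arXiv:2311.11323 — 3 statements merged into one kernel-verified Lean document; each statement's English description precedes it below -/
import Mathlib

section
/- For n = 2^d and d ≥ 1, FDSC_n has exactly 2^n vertices and exactly 2^{n-1}(d+2) edges. -/
open scoped Classical

namespace FDSC

/-- Vertices of `FDSC_n` with `n = 2^d`: binary strings of length `2^d`. -/
abbrev V (d : ℕ) : Type := Fin (2 ^ d) → Bool

/-- Bit `i` of a vertex (out-of-range bits are `false`). -/
def get {d : ℕ} (u : V d) (i : ℕ) : Bool :=
  if h : i < 2 ^ d then u ⟨i, h⟩ else false

def ofFun {d : ℕ} (f : ℕ → Bool) : V d := fun i => f i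

/-- Flip bit `i`. -/
def flip {d : ℕ} (i : ℕ) (u : V d) : V d :=
  ofFun (fun j => if j = i then !(get u j) else get u j)

/-- The two initial blocks of length `L` coincide (`m₁ = m₂`). -/
def sameHalves {d : ℕ} (L : ℕ) (u : V d) : Prop :=
  ∀ i < L, get u i = get u (i + L)

/-- Swap the two initial blocks of length `L` (`m₂ m₁ m₃`). -/
def swapHalves {d : ℕ} (L : ℕ) (u : V d) : V d :=
  ofFun (fun i => if i < L then get u (i + L)
    else if i < 2 * L then get u (i - L) else get u i)

/-- Complement the two initial blocks of length `L` (`m̄₁ m̄₂ m₃`). -/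
def complHalves {d : ℕ} (L : ℕ) (u : V d) : V d :=
  ofFun (fun i => if i < 2 * L then !(get u i) else get u i)

/-- Divide-and-swap neighbor for block length `L`. -/
noncomputable def dsNeighbor {d : ℕ} (L : ℕ) (u : V d) : V d :=
  if sameHalves L u then complHalves L u else swapHalves L u

/-- Adjacency in `FDSC_n`: the `e(1)`-edge (flip first bit), the `e(f)`-edge
(flip second bit), and the `e(2n/2^k)`-edges for `1 ≤ k ≤ d`. -/
def PreAdj {d : ℕ} (u v : V d) : Prop :=
  u ≠ v ∧ (v = flip 0 u ∨ v = flip 1 u ∨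
    ∃ k, 1 ≤ k ∧ k ≤ d ∧ v = dsNeighbor (2 ^ (d - k)) u)

/-- The folded divide-and-swap cube `FDSC_n`, `n = 2^d`. -/
noncomputable def graph (d : ℕ) : SimpleGraph (V d) where
  Adj u v := PreAdj u v ∨ PreAdj v u
  symm := ⟨fun _ _ h => h.symm⟩
  loopless := ⟨fun u h => by
    rcases h with h | h <;> exact h.1 rfl⟩

/-- Module addresses: binary strings of length `n/2 = 2^(d-1)`. -/
abbrev W (d : ℕ) : Type := Fin (2 ^ (d - 1)) → Bool

def getW {d : ℕ} (B : W d) (i : ℕ) : Bool :=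
  if h : i < 2 ^ (d - 1) then B ⟨i, h⟩ else false

/-- The vertex `A B` (inside-address `A`, module address `B`). -/
def concat {d : ℕ} (A B : W d) : V d :=
  ofFun (fun i => if i < 2 ^ (d - 1) then getW A i else getW B (i - 2 ^ (d - 1)))

/-- The module address of a vertex (its second half). -/
def secondHalf {d : ℕ} (u : V d) : W d :=
  fun i => get u ((i : ℕ) + 2 ^ (d - 1))

/-- Bitwise complement of a module address. -/
def complW {d : ℕ} (B : W d) : W d := fun i => !(B i)

/-- The external neighbor of a vertex: the `e(n)`-edge endpoint (`k = 1`). -/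
noncomputable def extNeighbor {d : ℕ} (u : V d) : V d :=
  dsNeighbor (2 ^ (d - 1)) u

/-- The star `K_{1,m}` with center `0`. -/
def star (m : ℕ) : SimpleGraph (Fin (m + 1)) where
  Adj i j := (i = 0 ∧ j ≠ 0) ∨ (j = 0 ∧ i ≠ 0)
  symm := ⟨fun _ _ h => h.symm⟩
  loopless := ⟨fun i h => by
    rcases h with ⟨h1, h2⟩ | ⟨h1, h2⟩ <;> exact h2 h1⟩

/-- Deleting the vertex set `R` disconnects the graph or leaves a trivial graph. -/
def Disconnects {α : Type*} (G : SimpleGraph α) (R : Set α) : Prop :=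
  ¬ (G.induce Rᶜ).Connected ∨ Rᶜ.Subsingleton

/-- `H`-structure connectivity: minimum number of subgraphs of `G`, each
isomorphic to `H`, whose vertex deletion disconnects `G` or leaves a trivial graph. -/
noncomputable def structConn {α β : Type*} (G : SimpleGraph α) (H : SimpleGraph β) : ℕ :=
  sInf { k | ∃ F : Finset G.Subgraph, F.card = k ∧
    (∀ S ∈ F, Nonempty (S.coe ≃g H)) ∧
    Disconnects G (⋃ S ∈ F, S.verts) }

/-- `H`-substructure connectivity: members are isomorphic to connected subgraphs of `H`. -/
noncomputable def substructConn {α β : Type*} (G : SimpleGraph α) (H : SimpleGraph β) : ℕ :=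
  sInf { k | ∃ F : Finset G.Subgraph, F.card = k ∧
    (∀ S ∈ F, S.coe.Connected ∧ ∃ H' : H.Subgraph, Nonempty (S.coe ≃g H'.coe)) ∧
    Disconnects G (⋃ S ∈ F, S.verts) }

section Aux
variable {d L : ℕ}

lemma get_lt (u : V d) {i : ℕ} (h : i < 2 ^ d) : get u i = u ⟨i, h⟩ := dif_pos h
lemma get_ge (u : V d) {i : ℕ} (h : ¬ i < 2 ^ d) : get u i = false := dif_neg h

lemma ext_get {u v : V d} (h : ∀ i, get u i = get v i) : u = v := by
  funext j
  have h2 := h j.1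
  rwa [get_lt u j.2, get_lt v j.2] at h2

lemma get_ofFun {f : ℕ → Bool} {i : ℕ} (h : i < 2 ^ d) :
    get (ofFun (d := d) f) i = f i := by
  simp [get, ofFun, h]

lemma get_flip (u : V d) {i : ℕ} (hi : i < 2 ^ d) (j : ℕ) :
    get (flip i u) j = if j = i then !(get u j) else get u j := by
  by_cases hj : j < 2 ^ d
  · rw [flip, get_ofFun hj]
  · rw [get_ge _ hj, if_neg (by omega), get_ge _ hj]

lemma get_swap (u : V d) (h2 : 2 * L ≤ 2 ^ d) (i : ℕ) :
    get (swapHalves L u) i =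
      if i < L then get u (i + L) else if i < 2 * L then get u (i - L) else get u i := by
  by_cases hj : i < 2 ^ d
  · rw [swapHalves, get_ofFun hj]
  · rw [get_ge _ hj, if_neg (by omega), if_neg (by omega), get_ge _ hj]

lemma get_compl (u : V d) (h2 : 2 * L ≤ 2 ^ d) (i : ℕ) :
    get (complHalves L u) i = if i < 2 * L then !(get u i) else get u i := by
  by_cases hj : i < 2 ^ d
  · rw [complHalves, get_ofFun hj]
  · rw [get_ge _ hj, if_neg (by omega), get_ge _ hj]

lemma swap_swap (u : V d) (h2 : 2 * L ≤ 2 ^ d) : swapHalves L (swapHalves L u) = u := by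
  apply ext_get; intro i
  rw [get_swap _ h2]
  split_ifs with h1 hm
  · rw [get_swap _ h2, if_neg (by omega), if_pos (by omega)]
    congr 1; omega
  · rw [get_swap _ h2, if_pos (by omega)]
    congr 1; omega
  · rw [get_swap _ h2, if_neg (by omega), if_neg (by omega)]

lemma compl_compl (u : V d) (h2 : 2 * L ≤ 2 ^ d) : complHalves L (complHalves L u) = u := by
  apply ext_get; intro i
  rw [get_compl _ h2, get_compl _ h2]
  split_ifs with h1
  · simp
  · rfl

lemma sameHalves_compl {u : V d} (h2 : 2 * L ≤ 2 ^ d) (hs : sameHalves L u) :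
    sameHalves L (complHalves L u) := by
  intro i hi
  rw [get_compl _ h2, get_compl _ h2, if_pos (by omega), if_pos (by omega), hs i hi]

lemma sameHalves_swap {u : V d} (h2 : 2 * L ≤ 2 ^ d) :
    sameHalves L (swapHalves L u) ↔ sameHalves L u := by
  constructor <;> intro hs i hi
  · have h3 := hs i hi
    rw [get_swap _ h2, get_swap _ h2, if_pos hi, if_neg (by omega), if_pos (by omega),
      show i + L - L = i by omega] at h3
    exact h3.symm
  · rw [get_swap _ h2, get_swap _ h2, if_pos hi, if_neg (by omega), if_pos (by omega),
      show i + L - L = i by omega]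
    exact (hs i hi).symm

lemma dsN_invol (u : V d) (h2 : 2 * L ≤ 2 ^ d) :
    dsNeighbor L (dsNeighbor L u) = u := by
  by_cases hs : sameHalves L u
  · rw [show dsNeighbor L u = complHalves L u from if_pos hs,
      show dsNeighbor L (complHalves L u) = complHalves L (complHalves L u) from
        if_pos (sameHalves_compl h2 hs),
      compl_compl _ h2]
  · rw [show dsNeighbor L u = swapHalves L u from if_neg hs,
      show dsNeighbor L (swapHalves L u) = swapHalves L (swapHalves L u) from
        if_neg (fun h => hs ((sameHalves_swap h2).mp h)),
      swap_swap _ h2]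

lemma dsN_ne (u : V d) (hL : 1 ≤ L) (h2 : 2 * L ≤ 2 ^ d) : dsNeighbor L u ≠ u := by
  intro h
  by_cases hs : sameHalves L u
  · rw [dsNeighbor, if_pos hs] at h
    have h3 := congrArg (fun w => get w 0) h
    rw [get_compl _ h2, if_pos (by omega)] at h3
    exact Bool.not_ne_self _ h3
  · rw [dsNeighbor, if_neg hs] at h
    rw [sameHalves] at hs; push_neg at hs
    obtain ⟨i, hi, hne⟩ := hs
    have h3 := congrArg (fun w => get w i) h
    rw [get_swap _ h2, if_pos hi] at h3
    exact hne h3.symm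

lemma flip_flip (u : V d) {i : ℕ} (hi : i < 2 ^ d) : flip i (flip i u) = u := by
  apply ext_get; intro j
  rw [get_flip _ hi, get_flip _ hi]
  split_ifs with h1 <;> simp

lemma flip_ne (u : V d) {i : ℕ} (hi : i < 2 ^ d) : flip i u ≠ u := by
  intro h
  have h3 := congrArg (fun w => get w i) h
  rw [get_flip _ hi, if_pos rfl] at h3
  exact Bool.not_ne_self _ h3

lemma two_le_pow (hd : 1 ≤ d) : 2 ≤ 2 ^ d := by
  have := Nat.pow_le_pow_right (by norm_num : 1 ≤ 2) hd
  simpa using this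

lemma flip_ne_flip (u : V d) (hd : 1 ≤ d) : flip 0 u ≠ flip 1 u := by
  have hn := two_le_pow hd
  intro h
  have h3 := congrArg (fun w => get w 0) h
  rw [get_flip _ (by omega : (0:ℕ) < 2 ^ d) 0, get_flip _ (by omega : (1:ℕ) < 2 ^ d) 0,
    if_pos rfl, if_neg (by omega)] at h3
  exact Bool.not_ne_self _ h3

lemma flip_ne_dsN (u : V d) {i : ℕ} (hi : i ≤ 1) (hd : 1 ≤ d) (hL : 1 ≤ L)
    (h2 : 2 * L ≤ 2 ^ d) : flip i u ≠ dsNeighbor L u := by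
  have hn := two_le_pow hd
  have hi' : i < 2 ^ d := by omega
  intro h
  by_cases hs : sameHalves L u
  · rw [dsNeighbor, if_pos hs] at h
    have h3 := congrArg (fun w => get w (1 - i)) h
    rw [get_flip _ hi', if_neg (by omega), get_compl _ h2, if_pos (by omega)] at h3
    exact Bool.not_ne_self _ h3.symm
  · rw [dsNeighbor, if_neg hs] at h
    rw [sameHalves] at hs; push_neg at hs
    obtain ⟨j, hj, hne⟩ := hs
    by_cases hji : j = i
    · have h3 := congrArg (fun w => get w (j + L)) h
      rw [get_flip _ hi', if_neg (by omega), get_swap _ h2, if_neg (by omega),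
        if_pos (by omega), show j + L - L = j by omega] at h3
      exact hne h3.symm
    · have h3 := congrArg (fun w => get w j) h
      rw [get_flip _ hi', if_neg hji, get_swap _ h2, if_pos hj] at h3
      exact hne h3

lemma dsN_ne_dsN (u : V d) {L L' : ℕ} (hL' : 1 ≤ L') (hLL' : 2 * L' ≤ L)
    (h2 : 2 * L ≤ 2 ^ d) : dsNeighbor L u ≠ dsNeighbor L' u := by
  have h2' : 2 * L' ≤ 2 ^ d := by omega
  intro h
  by_cases hs : sameHalves L u <;> by_cases hs' : sameHalves L' u
  · rw [dsNeighbor, if_pos hs, dsNeighbor, if_pos hs'] at h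
    have h3 := congrArg (fun w => get w (2 * L')) h
    rw [get_compl _ h2, if_pos (by omega), get_compl _ h2', if_neg (by omega)] at h3
    exact Bool.not_ne_self _ h3
  · rw [dsNeighbor, if_pos hs, dsNeighbor, if_neg hs'] at h
    have h3 := congrArg (fun w => get w L) h
    rw [get_compl _ h2, if_pos (by omega), get_swap _ h2', if_neg (by omega),
      if_neg (by omega)] at h3
    exact Bool.not_ne_self _ h3
  · rw [dsNeighbor, if_neg hs, dsNeighbor, if_pos hs'] at h
    rw [sameHalves] at hs; push_neg at hs
    obtain ⟨j, hj, hne⟩ := hs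
    have h3 := congrArg (fun w => get w (j + L)) h
    rw [get_swap _ h2, if_neg (by omega), if_pos (by omega), show j + L - L = j by omega,
      get_compl _ h2', if_neg (by omega)] at h3
    exact hne h3
  · rw [dsNeighbor, if_neg hs, dsNeighbor, if_neg hs'] at h
    rw [sameHalves] at hs; push_neg at hs
    obtain ⟨j, hj, hne⟩ := hs
    have h3 := congrArg (fun w => get w (j + L)) h
    rw [get_swap _ h2, if_neg (by omega), if_pos (by omega), show j + L - L = j by omega,
      get_swap _ h2', if_neg (by omega), if_neg (by omega)] at h3
    exact hne h3

/-- The `j`-th neighbor map. -/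
noncomputable def nbr (d : ℕ) (j : ℕ) (u : V d) : V d :=
  if j = 0 then flip 0 u else if j = 1 then flip 1 u
  else dsNeighbor (2 ^ (d - (j - 1))) u

lemma hpow {k : ℕ} (hk1 : 1 ≤ k) (hkd : k ≤ d) : 2 * 2 ^ (d - k) ≤ 2 ^ d := by
  calc 2 * 2 ^ (d - k) = 2 ^ (d - k + 1) := by rw [pow_succ]; ring
  _ ≤ 2 ^ d := Nat.pow_le_pow_right (by norm_num) (by omega)

lemma nbr_invol (hd : 1 ≤ d) {j : ℕ} (hj : j ≤ d + 1) (u : V d) :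
    nbr d j (nbr d j u) = u := by
  have hn := two_le_pow hd
  rcases Nat.lt_or_ge j 2 with h | h
  · interval_cases j <;>
      simp only [nbr, if_pos rfl, if_neg (by omega : (1:ℕ) ≠ 0)] <;>
      exact flip_flip u (by omega)
  · rw [nbr, if_neg (by omega), if_neg (by omega), nbr, if_neg (by omega), if_neg (by omega)]
    exact dsN_invol u (hpow (by omega) (by omega))

lemma nbr_ne (hd : 1 ≤ d) {j : ℕ} (hj : j ≤ d + 1) (u : V d) : nbr d j u ≠ u := by
  have hn := two_le_pow hd
  rcases Nat.lt_or_ge j 2 with h | h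
  · interval_cases j <;>
      simp only [nbr, if_pos rfl, if_neg (by omega : (1:ℕ) ≠ 0)] <;>
      exact flip_ne u (by omega)
  · rw [nbr, if_neg (by omega), if_neg (by omega)]
    exact dsN_ne u (Nat.one_le_two_pow) (hpow (by omega) (by omega))

lemma nbr_ne_nbr (hd : 1 ≤ d) {j j' : ℕ} (hjj : j < j') (hj' : j' ≤ d + 1) (u : V d) :
    nbr d j u ≠ nbr d j' u := by
  have hn := two_le_pow hd
  rcases Nat.lt_or_ge j' 2 with h' | h'
  · -- j = 0, j' = 1
    have hj0 : j = 0 := by omega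
    have hj1 : j' = 1 := by omega
    subst hj0; subst hj1
    simp only [nbr, if_pos rfl, if_neg (by omega : (1:ℕ) ≠ 0)]
    exact flip_ne_flip u hd
  · rw [show nbr d j' u = dsNeighbor (2 ^ (d - (j' - 1))) u by
      rw [nbr, if_neg (by omega), if_neg (by omega)]]
    rcases Nat.lt_or_ge j 2 with h | h
    · have : nbr d j u = flip j u := by
        interval_cases j <;> simp [nbr]
      rw [this]
      exact flip_ne_dsN u (by omega) hd Nat.one_le_two_pow (hpow (by omega) (by omega))
    · rw [nbr, if_neg (by omega), if_neg (by omega)]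
      exact dsN_ne_dsN u Nat.one_le_two_pow
        (by
          calc 2 * 2 ^ (d - (j' - 1)) = 2 ^ (d - (j' - 1) + 1) := by rw [pow_succ]; ring
          _ ≤ 2 ^ (d - (j - 1)) := Nat.pow_le_pow_right (by norm_num) (by omega))
        (hpow (by omega) (by omega))

lemma adj_iff (hd : 1 ≤ d) (u v : V d) :
    (graph d).Adj u v ↔ ∃ j : Fin (d + 2), v = nbr d j u := by
  have hn := two_le_pow hd
  have pre : ∀ w w' : V d, PreAdj w w' → ∃ j : Fin (d + 2), w' = nbr d j w := by
    intro w w' ⟨hne, h⟩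
    rcases h with h | h | ⟨k, hk1, hkd, h⟩
    · exact ⟨⟨0, by omega⟩, by simpa [nbr] using h⟩
    · exact ⟨⟨1, by omega⟩, by simpa [nbr] using h⟩
    · refine ⟨⟨k + 1, by omega⟩, ?_⟩
      rw [show ((⟨k + 1, by omega⟩ : Fin (d + 2)) : ℕ) = k + 1 from rfl,
        nbr, if_neg (by omega), if_neg (by omega), show k + 1 - 1 = k by omega]
      exact h
  constructor
  · intro h; rcases (h : PreAdj u v ∨ PreAdj v u) with h | h
    · exact pre u v h
    · obtain ⟨j, hj⟩ := pre v u h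
      refine ⟨j, ?_⟩
      rw [hj, nbr_invol hd (by omega) v]
  · rintro ⟨j, hj⟩
    show PreAdj u v ∨ PreAdj v u
    left
    refine ⟨fun h => nbr_ne hd (by omega) u (hj ▸ h.symm), ?_⟩
    rcases Nat.lt_or_ge (j : ℕ) 2 with h | h
    · rcases Nat.lt_or_ge (j : ℕ) 1 with h1 | h1
      · left
        rw [hj, nbr, if_pos (by omega)]
      · right; left
        rw [hj, nbr, if_neg (by omega), if_pos (by omega)]
    · right; right
      refine ⟨(j : ℕ) - 1, by omega, by have := j.isLt; omega, ?_⟩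
      rw [hj, nbr, if_neg (by omega), if_neg (by omega)]

lemma degree_eq (hd : 1 ≤ d) (u : V d) : (graph d).degree u = d + 2 := by
  have hinj : Function.Injective (fun j : Fin (d + 2) => nbr d (j : ℕ) u) := by
    intro a b hab
    by_contra hne
    have hne' : (a : ℕ) ≠ (b : ℕ) := fun h => hne (Fin.ext h)
    rcases Nat.lt_or_ge (a : ℕ) (b : ℕ) with h | h
    · exact nbr_ne_nbr hd h (by have := b.isLt; omega) u hab
    · exact nbr_ne_nbr hd (by omega) (by have := a.isLt; omega) u hab.symm
  have hset : (graph d).neighborFinset u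
      = Finset.image (fun j : Fin (d + 2) => nbr d (j : ℕ) u) Finset.univ := by
    ext v
    simp only [SimpleGraph.mem_neighborFinset, adj_iff hd, Finset.mem_image,
      Finset.mem_univ, true_and]
    exact ⟨fun ⟨j, hj⟩ => ⟨j, hj.symm⟩, fun ⟨j, hj⟩ => ⟨j, hj.symm⟩⟩
  rw [← SimpleGraph.card_neighborFinset_eq_degree, hset,
    Finset.card_image_of_injective _ hinj, Finset.card_univ, Fintype.card_fin]

end Aux

/-- `FDSC_n` has `2^n` vertices and `2^(n-1)(d+2)` edges, `n = 2^d`. -/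
theorem stmt1 (d : ℕ) (hd : 1 ≤ d) :
    Nat.card (V d) = 2 ^ (2 ^ d) ∧
    ((graph d).edgeSet).ncard = 2 ^ (2 ^ d - 1) * (d + 2) := by
  have hcard : Fintype.card (V d) = 2 ^ (2 ^ d) := by
    simp [Fintype.card_fun]
  constructor
  · rw [Nat.card_eq_fintype_card, hcard]
  · have hsum := SimpleGraph.sum_degrees_eq_twice_card_edges (graph d)
    have h1 : ∑ u : V d, (graph d).degree u = 2 ^ (2 ^ d) * (d + 2) := by
      rw [Finset.sum_congr rfl fun u _ => degree_eq hd u, Finset.sum_const,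
        Finset.card_univ, hcard, smul_eq_mul]
    have hp : 1 ≤ 2 ^ d := Nat.one_le_two_pow
    have h2 : 2 ^ (2 ^ d) = 2 * 2 ^ (2 ^ d - 1) := by
      rw [← pow_succ']
      congr 1
      omega
    have h3 : 2 * ((graph d).edgeFinset).card = 2 * (2 ^ (2 ^ d - 1) * (d + 2)) := by
      rw [← hsum, h1, h2]; ring
    have h4 := Nat.eq_of_mul_eq_mul_left (by norm_num) h3
    rw [Set.ncard_eq_toFinset_card']
    exact h4

end FDSC
end

section
/- For n = 2^d and d ≥ 2, if each module FDSC_{n/2} of FDSC_n is contracted to a single super vertex, the resulting graph is the complete graph K_{2^{n/2}}; equivalently, for any two distinct modules there is at least one cross edge between them. -/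
open scoped Classical

namespace FDSC

lemma pow_eq_aux {d : ℕ} (hd : 1 ≤ d) : 2 ^ d = 2 * 2 ^ (d - 1) := by
  cases d with
  | zero => omega
  | succ n => simp [pow_succ, Nat.mul_comm]

/-- contracting each module of `FDSC_n` to a super vertex yields the
complete graph: any two distinct modules are joined by at least one cross edge. -/
theorem stmt3 (d : ℕ) (hd : 2 ≤ d) (B₁ B₂ : W d) (h : B₁ ≠ B₂) :
    ∃ u : V d, secondHalf u = B₁ ∧ secondHalf (extNeighbor u) = B₂ ∧
      (graph d).Adj u (extNeighbor u) := by
  have hd1 : 1 ≤ d := by omega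
  set L := 2 ^ (d - 1) with hL
  have hLpos : 0 < L := Nat.pow_pos (by norm_num)
  have h2d : 2 ^ d = 2 * L := pow_eq_aux hd1
  set u : V d := concat B₂ B₁ with hu
  -- basic bit computations
  have hlo : ∀ i (hi : i < L), get u i = B₂ ⟨i, hi⟩ := by
    intro i hi
    have h1 : i < 2 ^ d := by omega
    simp only [hu, get, concat, ofFun, h1, dif_pos, if_pos hi, getW, dif_pos hi]
    simp [← hL, hi]
  have hhi : ∀ i (hi : i < L), get u (i + L) = B₁ ⟨i, hi⟩ := by
    intro i hi
    have h1 : i + L < 2 ^ d := by omega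
    have h2 : ¬ (i + L < L) := by omega
    simp only [hu, get, concat, ofFun, h1, dif_pos, if_neg h2, getW,
      Nat.add_sub_cancel, dif_pos hi]
    simp [← hL, h2, hi]
  have hsecond : secondHalf u = B₁ := by
    funext i
    exact hhi i i.isLt
  -- u does not have equal halves
  have hnot : ¬ sameHalves L u := by
    intro hsame
    apply h
    funext i
    have := hsame i i.isLt
    rw [hlo i i.isLt, hhi i i.isLt] at this
    exact this.symm
  have hv : extNeighbor u = swapHalves L u := by
    exact if_neg hnot
  have hvsecond : secondHalf (extNeighbor u) = B₂ := by
    funext i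
    have hi := i.isLt
    have h1 : ¬ ((i : ℕ) + L < L) := by omega
    have h2 : (i : ℕ) + L < 2 * L := by omega
    have h3 : (i : ℕ) + L < 2 ^ d := by omega
    show get (extNeighbor u) ((i : ℕ) + L) = B₂ i
    rw [hv]
    simp only [swapHalves, get, ofFun, h3, dif_pos, if_neg h1, if_pos h2,
      Nat.add_sub_cancel]
    exact hlo i hi
  have hne : u ≠ extNeighbor u := by
    intro he
    apply h
    rw [← hsecond, ← hvsecond, ← he]
  refine ⟨u, hsecond, hvsecond, (show PreAdj u (extNeighbor u) ∨ PreAdj (extNeighbor u) u from Or.inl ⟨hne, Or.inr (Or.inr ⟨1, le_refl 1, hd1, ?_⟩)⟩)⟩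
  rfl

end FDSC
end

section
/- In module G_i of FDSC_n with address B_i, the external neighbors of any two distinct vertices in V(G_i) \ {B_i B_i, B̄_i B_i} lie in different modules. -/
open scoped Classical

namespace FDSC

lemma two_mul_L {d : ℕ} (hd : 1 ≤ d) : 2 * 2 ^ (d - 1) = 2 ^ d := by
  rw [← pow_succ', Nat.sub_add_cancel hd]

lemma same_of_hu {d : ℕ} (hd : 1 ≤ d) (Bi : W d) (u : V d)
    (hu : secondHalf u = Bi) (hs : sameHalves (2 ^ (d - 1)) u) :
    u = concat Bi Bi := by
  set L := 2 ^ (d - 1) with hL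
  have h2L : 2 * L = 2 ^ d := two_mul_L hd
  funext i
  have hgu : get u i = u i := by
    rw [get, dif_pos i.isLt]
  rcases lt_or_ge (i : ℕ) L with h | h
  · have h1 : u i = get u ((i : ℕ) + L) := by rw [← hgu]; exact hs i h
    have : secondHalf u ⟨i, h⟩ = Bi ⟨i, h⟩ := by rw [hu]
    rw [concat, ofFun, if_pos h, getW, dif_pos h]
    rw [h1]
    rw [secondHalf] at this
    simpa using this
  · have hlt : (i : ℕ) - L < L := by
      have := i.isLt; omega
    have : secondHalf u ⟨(i : ℕ) - L, hlt⟩ = Bi ⟨(i : ℕ) - L, hlt⟩ := by rw [hu]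
    rw [secondHalf] at this
    simp only at this
    have heq : (i : ℕ) - L + L = (i : ℕ) := by omega
    rw [heq, hgu] at this
    rw [concat, ofFun, if_neg (by omega), getW, dif_pos hlt]
    exact this

lemma secondHalf_ext {d : ℕ} (hd : 1 ≤ d) (Bi : W d) (u : V d)
    (hu : secondHalf u = Bi) (hu1 : u ≠ concat Bi Bi) :
    ∀ j : Fin (2 ^ (d - 1)), secondHalf (extNeighbor u) j = get u j := by
  intro j
  have h2L : 2 * 2 ^ (d - 1) = 2 ^ d := two_mul_L hd
  have hj := j.isLt
  have hns : ¬ sameHalves (2 ^ (d - 1)) u := fun hs => hu1 (same_of_hu hd Bi u hu hs)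
  have hlt : (j : ℕ) + 2 ^ (d - 1) < 2 ^ d := by omega
  rw [extNeighbor, dsNeighbor, if_neg hns, secondHalf, get, dif_pos hlt]
  show swapHalves (2 ^ (d - 1)) u ⟨(j : ℕ) + 2 ^ (d - 1), hlt⟩ = get u j
  rw [swapHalves, ofFun]
  simp only
  rw [if_neg (by omega), if_pos (by omega)]
  congr 1
  omega

/-- the external neighbors of any two distinct vertices of `G_i` other
than `B_iB_i` and `B̄_iB_i` lie in different modules. -/
theorem stmt6 (d : ℕ) (hd : 2 ≤ d) (Bi : W d) (u v : V d)
    (hu : secondHalf u = Bi) (hv : secondHalf v = Bi) (huv : u ≠ v)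
    (hu1 : u ≠ concat Bi Bi) (hu2 : u ≠ concat (complW Bi) Bi)
    (hv1 : v ≠ concat Bi Bi) (hv2 : v ≠ concat (complW Bi) Bi) :
    secondHalf (extNeighbor u) ≠ secondHalf (extNeighbor v) := by
  have hd1 : 1 ≤ d := by omega
  intro heq
  apply huv
  set L := 2 ^ (d - 1) with hL
  have h2L : 2 * L = 2 ^ d := two_mul_L hd1
  have hfirst : ∀ j : Fin L, get u j = get v j := by
    intro j
    rw [← secondHalf_ext hd1 Bi u hu hu1 j, ← secondHalf_ext hd1 Bi v hv hv1 j, heq]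
  funext i
  have hgu : get u i = u i := by rw [get, dif_pos i.isLt]
  have hgv : get v i = v i := by rw [get, dif_pos i.isLt]
  rcases lt_or_ge (i : ℕ) L with h | h
  · have := hfirst ⟨i, h⟩
    rw [← hgu, ← hgv]
    simpa using this
  · have hlt : (i : ℕ) - L < L := by have := i.isLt; omega
    have h1 : secondHalf u ⟨(i : ℕ) - L, hlt⟩ = secondHalf v ⟨(i : ℕ) - L, hlt⟩ := by
      rw [hu, hv]
    rw [secondHalf, secondHalf] at h1
    simp only at h1
    have heq2 : (i : ℕ) - L + L = (i : ℕ) := by omega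
    rw [heq2, hgu, hgv] at h1
    exact h1

end FDSC
end
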